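/- arXiv:1304.3969 — 6 statements merged into one kernel-verified Lean document; each statement's English description precedes it below -/
import Mathlib

section
/- Let g : ℝ → ℝ be a convex, three times differentiable function and let M > 0 be such that |g'''(t)| ≤ M·g''(t) for all t ∈ ℝ. Then for all t ≥ 0, (g''(0)/M²)·(exp(−M·t) + M·t − 1) ≤ g(t) − g(0) − g'(0)·t ≤ (g''(0)/M²)·(exp(M·t) + M·t − 1). -/
/-!
The hypothesis `g''' ≤ M g''` makes `g'' t * exp (-M t)` nonincreasing and `-g''' ≤ M g''` makes
`g'' t * exp (M t)` nondecreasing, so `g'' 0 * exp (-M t) ≤ g'' t ≤ g'' 0 * exp (M t)` for `t ≥ 0`.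
Integrating twice from `0` against `ψ_c t = (exp (c t) - c t - 1) / c²`, which has
`ψ_c 0 = ψ_c' 0 = 0` and `ψ_c'' t = exp (c t)`, traps `g t - g 0 - g' 0 * t` between
`g'' 0 * ψ_{-M} t` and `g'' 0 * ψ_M t`; the latter is at most `g'' 0 / M² * (exp (M t) + M t - 1)`
since `g'' 0 ≥ 0`.
-/

open Real Set

section Comparison

variable {f f' f'' φ φ' φ'' : ℝ → ℝ}

theorem sub_le_sub_of_hasDerivAt_le (hf : ∀ x, HasDerivAt f (f' x) x)
    (hφ : ∀ x, HasDerivAt φ (φ' x) x) (h : ∀ x, 0 ≤ x → f' x ≤ φ' x) {t : ℝ} (ht : 0 ≤ t) :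
    f t - f 0 ≤ φ t - φ 0 := by
  have hd : ∀ x, HasDerivAt (fun x => φ x - f x) (φ' x - f' x) x := fun x => (hφ x).sub (hf x)
  have hmono : MonotoneOn (fun x => φ x - f x) (Ici 0) :=
    monotoneOn_of_hasDerivWithinAt_nonneg (convex_Ici 0)
      (fun x _ => (hd x).continuousAt.continuousWithinAt) (fun x _ => (hd x).hasDerivWithinAt)
      (fun x hx => sub_nonneg.2 (h x (interior_subset hx)))
  linarith [hmono self_mem_Ici ht ht]

theorem taylor_sub_le_of_hasDerivAt_le (hf : ∀ x, HasDerivAt f (f' x) x)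
    (hf' : ∀ x, HasDerivAt f' (f'' x) x) (hφ : ∀ x, HasDerivAt φ (φ' x) x)
    (hφ' : ∀ x, HasDerivAt φ' (φ'' x) x) (h : ∀ x, 0 ≤ x → f'' x ≤ φ'' x) {t : ℝ} (ht : 0 ≤ t) :
    f t - f 0 - f' 0 * t ≤ φ t - φ 0 - φ' 0 * t := by
  have hlin (a x : ℝ) : HasDerivAt (fun x => a * x) a x := by
    simpa using (hasDerivAt_id x).const_mul a
  have := sub_le_sub_of_hasDerivAt_le (f := fun x => f x - f' 0 * x)
    (φ := fun x => φ x - φ' 0 * x) (fun x => (hf x).sub (hlin (f' 0) x))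
    (fun x => (hφ x).sub (hlin (φ' 0) x))
    (fun x hx => by linarith [sub_le_sub_of_hasDerivAt_le hf' hφ' h hx]) ht
  linarith

theorem le_mul_exp_of_hasDerivAt_le_mul {c : ℝ} (hf : ∀ x, HasDerivAt f (f' x) x)
    (h : ∀ x, 0 ≤ x → f' x ≤ c * f x) {t : ℝ} (ht : 0 ≤ t) : f t ≤ f 0 * exp (c * t) := by
  have hexp (x : ℝ) : HasDerivAt (fun x => exp (-(c * x))) (-c * exp (-(c * x))) x := by
    simpa [mul_comm] using ((hasDerivAt_id x).const_mul c).neg.exp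
  have hdecay := sub_le_sub_of_hasDerivAt_le (fun x => (hf x).mul (hexp x))
    (fun _ => hasDerivAt_const _ (0 : ℝ))
    (fun x hx => by
      have := mul_le_mul_of_nonneg_right (h x hx) (exp_pos (-(c * x))).le
      linarith) ht
  calc f t = f t * exp (-(c * t)) * exp (c * t) := by
        rw [mul_assoc, ← exp_add, neg_add_cancel, exp_zero, mul_one]
    _ ≤ f 0 * exp (c * t) := by
      gcongr
      simpa using hdecay

end Comparison

section ExpRemainder

variable {a c : ℝ}

theorem hasDerivAt_exp_mul_sub_one_div (hc : c ≠ 0) (x : ℝ) :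
    HasDerivAt (fun u => (exp (c * u) - 1) / c) (exp (c * x)) x := by
  have hlin : HasDerivAt (fun u => c * u) c x := by simpa using (hasDerivAt_id x).const_mul c
  exact ((hlin.exp.sub_const 1).div_const c).congr_deriv (by field_simp)

theorem hasDerivAt_exp_mul_sub_sub_one_div_sq (hc : c ≠ 0) (x : ℝ) :
    HasDerivAt (fun u => (exp (c * u) - c * u - 1) / c ^ 2) ((exp (c * x) - 1) / c) x := by
  have hlin : HasDerivAt (fun u => c * u) c x := by simpa using (hasDerivAt_id x).const_mul c
  exact (((hlin.exp.sub hlin).sub_const 1).div_const (c ^ 2)).congr_deriv (by field_simp)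

theorem taylor_sub_le_mul_exp_remainder {f f' f'' : ℝ → ℝ} (hc : c ≠ 0)
    (hf : ∀ x, HasDerivAt f (f' x) x) (hf' : ∀ x, HasDerivAt f' (f'' x) x)
    (h : ∀ x, 0 ≤ x → f'' x ≤ a * exp (c * x)) {t : ℝ} (ht : 0 ≤ t) :
    f t - f 0 - f' 0 * t ≤ a * ((exp (c * t) - c * t - 1) / c ^ 2) := by
  simpa using taylor_sub_le_of_hasDerivAt_le hf hf'
    (fun x => (hasDerivAt_exp_mul_sub_sub_one_div_sq hc x).const_mul a)
    (fun x => (hasDerivAt_exp_mul_sub_one_div hc x).const_mul a) h ht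

theorem mul_exp_remainder_le_taylor_sub {f f' f'' : ℝ → ℝ} (hc : c ≠ 0)
    (hf : ∀ x, HasDerivAt f (f' x) x) (hf' : ∀ x, HasDerivAt f' (f'' x) x)
    (h : ∀ x, 0 ≤ x → a * exp (c * x) ≤ f'' x) {t : ℝ} (ht : 0 ≤ t) :
    a * ((exp (c * t) - c * t - 1) / c ^ 2) ≤ f t - f 0 - f' 0 * t := by
  simpa using taylor_sub_le_of_hasDerivAt_le
    (fun x => (hasDerivAt_exp_mul_sub_sub_one_div_sq hc x).const_mul a)
    (fun x => (hasDerivAt_exp_mul_sub_one_div hc x).const_mul a) hf hf' h ht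

end ExpRemainder

theorem self_concordance_bound_general
    (g g' g'' g''' : ℝ → ℝ) (M : ℝ) (hM : 0 < M)
    (hd1 : ∀ t : ℝ, HasDerivAt g (g' t) t)
    (hd2 : ∀ t : ℝ, HasDerivAt g' (g'' t) t)
    (hd3 : ∀ t : ℝ, HasDerivAt g'' (g''' t) t)
    (hbound : ∀ t : ℝ, |g''' t| ≤ M * g'' t) :
    ∀ t : ℝ, 0 ≤ t →
      (g'' 0 / M ^ 2) * (Real.exp (-(M * t)) + M * t - 1)
          ≤ g t - g 0 - g' 0 * t ∧
        g t - g 0 - g' 0 * t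
          ≤ (g'' 0 / M ^ 2) * (Real.exp (M * t) + M * t - 1) := by
  intro t ht
  have hg''_nonneg : 0 ≤ g'' 0 := nonneg_of_mul_nonneg_right ((abs_nonneg _).trans (hbound 0)) hM
  have hupper : ∀ x, 0 ≤ x → g'' x ≤ g'' 0 * exp (M * x) :=
    fun x => le_mul_exp_of_hasDerivAt_le_mul hd3 (fun y _ => (le_abs_self _).trans (hbound y))
  have hlower : ∀ x, 0 ≤ x → g'' 0 * exp (-M * x) ≤ g'' x := fun x hx => by
    have := le_mul_exp_of_hasDerivAt_le_mul (f := fun y => -g'' y) (c := -M) (fun y => (hd3 y).neg)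
      (fun y _ => by linarith [neg_abs_le (g''' y), hbound y]) hx
    linarith
  constructor
  · calc g'' 0 / M ^ 2 * (exp (-(M * t)) + M * t - 1)
          = g'' 0 * ((exp (-M * t) - -M * t - 1) / (-M) ^ 2) := by rw [neg_mul]; ring
      _ ≤ g t - g 0 - g' 0 * t :=
          mul_exp_remainder_le_taylor_sub (neg_ne_zero.2 hM.ne') hd1 hd2 hlower ht
  · calc g t - g 0 - g' 0 * t ≤ g'' 0 * ((exp (M * t) - M * t - 1) / M ^ 2) :=
          taylor_sub_le_mul_exp_remainder hM.ne' hd1 hd2 hupper ht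
      _ ≤ g'' 0 * ((exp (M * t) + M * t - 1) / M ^ 2) := by
          gcongr
          linarith [mul_nonneg hM.le ht]
      _ = g'' 0 / M ^ 2 * (exp (M * t) + M * t - 1) := by ring

/-- Self-concordance bound (Lemma B.1, due to Bach): if `g` is convex, three times
differentiable, and `|g''' t| ≤ M * g'' t` for all `t`, then for all `t ≥ 0`,
`(g'' 0 / M²) * (exp (−M t) + M t − 1) ≤ g t − g 0 − g' 0 * t
  ≤ (g'' 0 / M²) * (exp (M t) + M t − 1)`. -/
theorem self_concordance_bound
    (g g' g'' g''' : ℝ → ℝ) (M : ℝ) (hM : 0 < M)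
    (hconv : ConvexOn ℝ Set.univ g)
    (hd1 : ∀ t : ℝ, HasDerivAt g (g' t) t)
    (hd2 : ∀ t : ℝ, HasDerivAt g' (g'' t) t)
    (hd3 : ∀ t : ℝ, HasDerivAt g'' (g''' t) t)
    (hbound : ∀ t : ℝ, |g''' t| ≤ M * g'' t) :
    ∀ t : ℝ, 0 ≤ t →
      (g'' 0 / M ^ 2) * (Real.exp (-(M * t)) + M * t - 1)
          ≤ g t - g 0 - g' 0 * t ∧
        g t - g 0 - g' 0 * t
          ≤ (g'' 0 / M ^ 2) * (Real.exp (M * t) + M * t - 1) :=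
  self_concordance_bound_general g g' g'' g''' M hM hd1 hd2 hd3 hbound
end

section
/- For all real numbers a and b, log(1 + exp(a+b)) − log(1 + exp(a)) − G(a)·b ≥ G(a)·(1 − G(a))·(b²/2 − |b|³/6). -/
/-- The logistic link function `G(t) = exp t / (1 + exp t)`. -/
noncomputable def logistic (t : ℝ) : ℝ := Real.exp t / (1 + Real.exp t)

/-!
For `b ≥ 0` the left side is `φ(b) - φ(0) - φ'(0) b` with `φ x = log (1 + exp (a + x))`, whose
second derivative is `G'(a + x)`. Since `G' = G (1 - G)` and `G(t + s) ≥ G t`,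
`1 - G(t + s) = G(-t - s) ≥ exp (-s) G(-t)`, we get `G'(a + x) ≥ exp (-x) G'(a) ≥ (1 - x) G'(a)`;
integrating twice from `0` gives the bound. The case `b < 0` is the case `-b > 0` for `-a`, because
`log (1 + exp (-t)) = log (1 + exp t) - t` and `G(-t) = 1 - G t`.
-/

open Real Set

theorem le_of_hasDerivAt_le {f f' g g' : ℝ → ℝ} {a : ℝ}
    (hf : ∀ x, HasDerivAt f (f' x) x) (hg : ∀ x, HasDerivAt g (g' x) x) (ha : f a ≤ g a)
    (hle : ∀ x, a ≤ x → f' x ≤ g' x) {x : ℝ} (hx : a ≤ x) : f x ≤ g x := by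
  have hmono : MonotoneOn (g - f) (Ici a) :=
    monotoneOn_of_hasDerivWithinAt_nonneg (convex_Ici a)
      (fun y _ => ((hg y).sub (hf y)).continuousAt.continuousWithinAt)
      (fun y _ => ((hg y).sub (hf y)).hasDerivWithinAt)
      (fun y hy => sub_nonneg.2 (hle y (by rw [interior_Ici] at hy; exact le_of_lt hy)))
  have := hmono self_mem_Ici hx hx
  simp only [Pi.sub_apply] at this
  linarith

theorem le_of_hasDerivAt_hasDerivAt_le {f f' f'' g g' g'' : ℝ → ℝ} {a : ℝ}
    (hf : ∀ x, HasDerivAt f (f' x) x) (hf' : ∀ x, HasDerivAt f' (f'' x) x)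
    (hg : ∀ x, HasDerivAt g (g' x) x) (hg' : ∀ x, HasDerivAt g' (g'' x) x)
    (ha : f a ≤ g a) (ha' : f' a ≤ g' a) (hle : ∀ x, a ≤ x → f'' x ≤ g'' x) {x : ℝ}
    (hx : a ≤ x) : f x ≤ g x :=
  le_of_hasDerivAt_le hf hg ha (fun _ hy => le_of_hasDerivAt_le hf' hg' ha' hle hy) hx

theorem logistic_eq_sigmoid : logistic = sigmoid := by
  ext t
  rw [logistic, sigmoid_def, exp_neg]
  field_simp
  ring

theorem hasDerivAt_log_one_add_exp (x : ℝ) :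
    HasDerivAt (fun x => log (1 + exp x)) (sigmoid x) x := by
  convert ((hasDerivAt_exp x).const_add 1).log (by positivity) using 1
  rw [← logistic_eq_sigmoid, logistic]

theorem log_one_add_exp_neg (x : ℝ) : log (1 + exp (-x)) = log (1 + exp x) - x := by
  rw [eq_sub_iff_add_eq, ← log_exp x, ← log_mul (by positivity) (by positivity), log_exp,
    add_mul, one_mul, ← exp_add, neg_add_cancel, exp_zero, add_comm]

theorem exp_neg_mul_sigmoid_le_sigmoid_sub (x : ℝ) {s : ℝ} (hs : 0 ≤ s) :
    exp (-s) * sigmoid x ≤ sigmoid (x - s) := by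
  rw [sigmoid_def, sigmoid_def, exp_neg, ← mul_inv, neg_sub, exp_sub, div_eq_mul_inv, ← exp_neg]
  gcongr
  nlinarith [one_le_exp hs, exp_pos (-x)]

theorem exp_neg_mul_sigmoid_deriv_le (t : ℝ) {s : ℝ} (hs : 0 ≤ s) :
    exp (-s) * (sigmoid t * (1 - sigmoid t)) ≤ sigmoid (t + s) * (1 - sigmoid (t + s)) := by
  rw [← sigmoid_neg, ← sigmoid_neg, mul_left_comm]
  have hσ : sigmoid t ≤ sigmoid (t + s) := sigmoid_le (by linarith)
  have hσneg : exp (-s) * sigmoid (-t) ≤ sigmoid (-(t + s)) := by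
    simpa [sub_eq_add_neg, add_comm] using exp_neg_mul_sigmoid_le_sigmoid_sub (-t) hs
  exact mul_le_mul hσ hσneg (mul_nonneg (exp_pos _).le (sigmoid_nonneg _)) (sigmoid_nonneg _)

theorem log_one_add_exp_add_minoration (a : ℝ) {b : ℝ} (hb : 0 ≤ b) :
    sigmoid a * (1 - sigmoid a) * (b ^ 2 / 2 - b ^ 3 / 6)
      ≤ log (1 + exp (a + b)) - log (1 + exp a) - sigmoid a * b := by
  set c := sigmoid a * (1 - sigmoid a)
  have hc : 0 ≤ c := mul_nonneg (sigmoid_nonneg a) (sub_nonneg.2 (sigmoid_le_one a))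
  have hminorant : ∀ x, HasDerivAt
      (fun x => log (1 + exp a) + sigmoid a * x + c * (x ^ 2 / 2 - x ^ 3 / 6))
      (sigmoid a + c * (x - x ^ 2 / 2)) x := fun x =>
    (((hasDerivAt_id' x).const_mul (sigmoid a)).const_add _).add
      ((((hasDerivAt_pow 2 x).div_const 2).sub ((hasDerivAt_pow 3 x).div_const 6)).const_mul c)
      |>.congr_deriv (by ring)
  have hminorant' : ∀ x, HasDerivAt (fun x => sigmoid a + c * (x - x ^ 2 / 2)) (c * (1 - x)) x :=
    fun x => ((((hasDerivAt_id' x).sub ((hasDerivAt_pow 2 x).div_const 2)).const_mul c).const_add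
      (sigmoid a)).congr_deriv (by ring)
  have hsecond : ∀ x, 0 ≤ x → c * (1 - x) ≤ sigmoid (a + x) * (1 - sigmoid (a + x)) := by
    intro x hx
    calc c * (1 - x) ≤ exp (-x) * c := by
          rw [mul_comm]; gcongr; linarith [add_one_le_exp (-x)]
      _ ≤ _ := exp_neg_mul_sigmoid_deriv_le a hx
  have := le_of_hasDerivAt_hasDerivAt_le hminorant hminorant'
    (fun x => (hasDerivAt_log_one_add_exp (a + x)).comp_const_add a x)
    (fun x => (hasDerivAt_sigmoid (a + x)).comp_const_add a x)
    (by simp) (by simp) hsecond hb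
  linarith

/-- Per-observation quadratic-minus-cubic minoration of the logistic log-partition
function (Step 2 of the proof of the Minoration Lemma): for all `a b : ℝ`,
`log(1+exp(a+b)) − log(1+exp a) − G(a)·b ≥ G(a)·(1−G(a))·(b²/2 − |b|³/6)`. -/
theorem logistic_logPartition_minoration (a b : ℝ) :
    Real.log (1 + Real.exp (a + b)) - Real.log (1 + Real.exp a) - logistic a * b
      ≥ logistic a * (1 - logistic a) * (b ^ 2 / 2 - |b| ^ 3 / 6) := by
  rw [logistic_eq_sigmoid, ge_iff_le]
  rcases le_total 0 b with hb | hb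
  · simpa only [abs_of_nonneg hb] using log_one_add_exp_add_minoration a hb
  · have := log_one_add_exp_add_minoration (-a) (neg_nonneg.2 hb)
    rw [← neg_add, log_one_add_exp_neg, log_one_add_exp_neg, sigmoid_neg] at this
    rw [abs_of_nonpos hb]
    linarith
end

section
/- For all real numbers t₀ and t, |G(t + t₀) − G(t₀)| ≤ G'(t₀)·(exp(|t|) − 1). Moreover, if |t| ≤ 1 then exp(|t|) − 1 ≤ 2·|t|, so in that case |G(t + t₀) − G(t₀)| ≤ 2·G'(t₀)·|t|. -/
/-- The derivative of the logistic link function: `G'(t) = G(t)·(1 − G(t))`. -/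
noncomputable def logisticDeriv (t : ℝ) : ℝ := logistic t * (1 - logistic t)

/-!
With `a = exp t₀` and `b = exp t`, a direct computation gives
`G(t + t₀) − G(t₀) = G'(t₀) · (b − 1) · (1 + a) / (1 + a b)`.
For `t ≥ 0` the last factor is at most `1`; for `t < 0` it is at most `1 / b`, and
`(1 − b) / b = exp |t| − 1`. The bound for `|t| ≤ 1` is then `exp x − 1 ≤ 2 x` on `[0, 1]`.
-/

open Real

lemma logisticDeriv_eq (t : ℝ) : logisticDeriv t = exp t / (1 + exp t) ^ 2 := by
  have := exp_pos t
  unfold logisticDeriv logistic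
  field_simp
  ring

lemma logisticDeriv_nonneg (t : ℝ) : 0 ≤ logisticDeriv t := by
  rw [logisticDeriv_eq]
  positivity

lemma logistic_add_sub_logistic (t₀ t : ℝ) :
    logistic (t + t₀) - logistic t₀ =
      logisticDeriv t₀ * (exp t - 1) * ((1 + exp t₀) / (1 + exp t * exp t₀)) := by
  have := exp_pos t
  have := exp_pos t₀
  rw [logisticDeriv_eq]
  unfold logistic
  rw [exp_add]
  field_simp
  ring

lemma abs_exp_sub_one_mul_div_le {a : ℝ} (ha : 0 ≤ a) (t : ℝ) :
    |exp t - 1| * ((1 + a) / (1 + exp t * a)) ≤ exp |t| - 1 := by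
  have hb := exp_pos t
  have hden : 0 < 1 + exp t * a := by positivity
  rcases le_or_gt 0 t with ht | ht
  · have hb1 : 1 ≤ exp t := one_le_exp ht
    rw [abs_of_nonneg ht, abs_of_nonneg (by linarith)]
    have hfactor : (1 + a) / (1 + exp t * a) ≤ 1 := by
      rw [div_le_one hden]
      nlinarith
    nlinarith
  · have hb1 : exp t < 1 := exp_lt_one_iff.mpr ht
    rw [abs_of_neg ht, abs_of_neg (by linarith), exp_neg]
    rw [mul_div_assoc', div_le_iff₀ hden, ← sub_nonneg]
    have key : ((exp t)⁻¹ - 1) * (1 + exp t * a) - -(exp t - 1) * (1 + a)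
        = (1 - exp t) ^ 2 / exp t := by
      field_simp
      ring
    rw [key]
    positivity

lemma abs_logistic_add_sub_logistic_le (t₀ t : ℝ) :
    |logistic (t + t₀) - logistic t₀| ≤ logisticDeriv t₀ * (exp |t| - 1) := by
  have hfactor : 0 < (1 + exp t₀) / (1 + exp t * exp t₀) := by positivity
  rw [logistic_add_sub_logistic, abs_mul, abs_mul, abs_of_nonneg (logisticDeriv_nonneg t₀),
    abs_of_pos hfactor, mul_assoc]
  exact mul_le_mul_of_nonneg_left (abs_exp_sub_one_mul_div_le (exp_pos t₀).le t)
    (logisticDeriv_nonneg t₀)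

lemma exp_abs_sub_one_le_two_mul_abs {t : ℝ} (ht : |t| ≤ 1) : exp |t| - 1 ≤ 2 * |t| := by
  have h := abs_exp_sub_one_le (x := |t|) (by rwa [abs_abs])
  rw [abs_abs] at h
  exact (le_abs_self _).trans h

/-- Lemma B.3 (auxiliary bound for sparsity analysis): for all `t₀ t : ℝ`,
`|G(t + t₀) − G(t₀)| ≤ G'(t₀)·(exp |t| − 1)`; moreover, if `|t| ≤ 1` then
`exp |t| − 1 ≤ 2|t|`, so in that case `|G(t + t₀) − G(t₀)| ≤ 2·G'(t₀)·|t|`. -/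
theorem logistic_increment_bound (t₀ t : ℝ) :
    |logistic (t + t₀) - logistic t₀| ≤ logisticDeriv t₀ * (Real.exp |t| - 1) ∧
      (|t| ≤ 1 →
        Real.exp |t| - 1 ≤ 2 * |t| ∧
          |logistic (t + t₀) - logistic t₀| ≤ 2 * logisticDeriv t₀ * |t|) := by
  have hbound := abs_logistic_add_sub_logistic_le t₀ t
  refine ⟨hbound, fun ht => ⟨exp_abs_sub_one_le_two_mul_abs ht, ?_⟩⟩
  calc |logistic (t + t₀) - logistic t₀| ≤ logisticDeriv t₀ * (exp |t| - 1) := hbound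
    _ ≤ logisticDeriv t₀ * (2 * |t|) :=
      mul_le_mul_of_nonneg_left (exp_abs_sub_one_le_two_mul_abs ht) (logisticDeriv_nonneg t₀)
    _ = 2 * logisticDeriv t₀ * |t| := by ring
end

section
/- Let F : ℝ^p → ℝ be convex with F(0) = 0, let N : ℝ^p → ℝ be a seminorm, let A ⊆ ℝ^p be star-shaped about the origin (t·δ ∈ A whenever δ ∈ A and t ∈ [0,1]), and let r > 0. If F(δ) ≥ N(δ)²/3 for every δ ∈ A with N(δ) ≤ r, then F(δ) ≥ min{ N(δ)²/3, r·N(δ)/3 } for every δ ∈ A. -/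
/-!
Along the ray through `δ`, convexity and `F 0 = 0` make `t ↦ F (t • δ) / t` nondecreasing. If
`N δ > r`, rescale `δ` to `t • δ` with `t = r / N δ`, a point of `A` of seminorm exactly `r`: the
local bound gives `F (t • δ) ≥ r ^ 2 / 3`, hence `F δ ≥ F (t • δ) / t ≥ r · N δ / 3`.
-/

theorem ConvexOn.map_smul_le_mul_of_map_zero {E : Type*} [AddCommGroup E] [Module ℝ E]
    {s : Set E} {f : E → ℝ} (hf : ConvexOn ℝ s f) (h0 : (0 : E) ∈ s) (hf0 : f 0 = 0)
    {x : E} (hx : x ∈ s) {t : ℝ} (ht : t ∈ Set.Icc (0 : ℝ) 1) : f (t • x) ≤ t * f x := by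
  simpa [hf0] using hf.2 hx h0 ht.1 (sub_nonneg.2 ht.2) (add_sub_cancel t 1)

theorem Seminorm.map_div_self_smul {E : Type*} [AddCommGroup E] [Module ℝ E]
    (N : Seminorm ℝ E) {x : E} (hx : N x ≠ 0) {r : ℝ} (hr : 0 ≤ r) :
    N ((r / N x) • x) = r := by
  rw [map_smul_eq_mul, Real.norm_of_nonneg (div_nonneg hr (apply_nonneg N x)),
    div_mul_cancel₀ r hx]

/-- Convexity-based self-improvement argument (Step 1 of the proof of the Minoration
Lemma): if `F` is convex with `F 0 = 0`, `N` is a seminorm, `A` is star-shaped about the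
origin and `F δ ≥ N δ ^ 2 / 3` for every `δ ∈ A` with `N δ ≤ r`, then
`F δ ≥ min (N δ ^ 2 / 3) (r · N δ / 3)` for every `δ ∈ A`. -/
theorem quadratic_minorant_self_improvement {p : ℕ}
    (F : (Fin p → ℝ) → ℝ) (hFconv : ConvexOn ℝ Set.univ F) (hF0 : F 0 = 0)
    (N : Seminorm ℝ (Fin p → ℝ))
    (A : Set (Fin p → ℝ))
    (hA : ∀ δ ∈ A, ∀ t ∈ Set.Icc (0 : ℝ) 1, t • δ ∈ A)
    (r : ℝ) (hr : 0 < r)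
    (hloc : ∀ δ ∈ A, N δ ≤ r → N δ ^ 2 / 3 ≤ F δ) :
    ∀ δ ∈ A, min (N δ ^ 2 / 3) (r * N δ / 3) ≤ F δ := by
  intro δ hδ
  rcases le_or_gt (N δ) r with hle | hlt
  · exact (min_le_left _ _).trans (hloc δ hδ hle)
  have hNpos : 0 < N δ := hr.trans hlt
  set t := r / N δ with ht_def
  have ht_pos : 0 < t := div_pos hr hNpos
  have ht : t ∈ Set.Icc (0 : ℝ) 1 := ⟨ht_pos.le, (div_le_one hNpos).2 hlt.le⟩
  have hNt : N (t • δ) = r := N.map_div_self_smul hNpos.ne' hr.le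
  have hquad : r ^ 2 / 3 ≤ F (t • δ) := hNt ▸ hloc _ (hA δ hδ t ht) hNt.le
  have hray : F (t • δ) ≤ t * F δ :=
    hFconv.map_smul_le_mul_of_map_zero (Set.mem_univ 0) hF0 (Set.mem_univ δ) ht
  calc min (N δ ^ 2 / 3) (r * N δ / 3) ≤ r * N δ / 3 := min_le_right _ _
    _ = r ^ 2 / 3 / t := by rw [ht_def]; field_simp
    _ ≤ F δ := by rw [div_le_iff₀ ht_pos]; linarith
end

section
/- Let λ > 0, c > 1 and c̄ = (c+1)/(c−1). Suppose λ/n ≥ c·‖∇Λ(η₀)‖_∞ and let η̂ be a global minimizer over ℝ^p of η ↦ Λ(η) + (λ/n)·‖η‖₁. Then δ = η̂ − η₀ satisfies ‖δ_{T^c}‖₁ ≤ c̄·‖δ_T‖₁, i.e. η̂ − η₀ ∈ Δ_c̄. -/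
open Finset

/-- Inner product `x_i'η` of the `i`-th design vector with `η`. -/
def xdot {n p : ℕ} (x : Fin n → Fin p → ℝ) (η : Fin p → ℝ) (i : Fin n) : ℝ :=
  ∑ j, x i j * η j

/-- Average logistic negative log-likelihood
`Λ(η) = (1/n)∑ᵢ [log(1+exp(x_i'η)) − y_i·(x_i'η)]`. -/
noncomputable def Lam {n p : ℕ} (x : Fin n → Fin p → ℝ) (y : Fin n → ℝ)
    (η : Fin p → ℝ) : ℝ :=
  (1 / (n : ℝ)) * ∑ i, (Real.log (1 + Real.exp (xdot x η i)) - y i * xdot x η i)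

/-- Gradient of `Λ`: `∇Λ(η) = (1/n)∑ᵢ (G(x_i'η) − y_i)·x_i`. -/
noncomputable def gradLam {n p : ℕ} (x : Fin n → Fin p → ℝ) (y : Fin n → ℝ)
    (η : Fin p → ℝ) (j : Fin p) : ℝ :=
  (1 / (n : ℝ)) * ∑ i, (logistic (xdot x η i) - y i) * x i j

/-- Sup-norm `‖∇Λ(η)‖_∞` of the gradient of `Λ`. -/
noncomputable def gradLamSup {n p : ℕ} (x : Fin n → Fin p → ℝ) (y : Fin n → ℝ)
    (η : Fin p → ℝ) : ℝ :=
  ⨆ j : Fin p, |gradLam x y η j|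

/-- The logistic weights `w_i = G(x_i'η₀)·(1 − G(x_i'η₀))`. -/
noncomputable def wgt {n p : ℕ} (x : Fin n → Fin p → ℝ) (η₀ : Fin p → ℝ) (i : Fin n) : ℝ :=
  logistic (xdot x η₀ i) * (1 - logistic (xdot x η₀ i))

/-- Weighted prediction norm `‖√w_i·x_i'δ‖_{2,n} = ((1/n)∑ᵢ w_i (x_i'δ)²)^{1/2}`. -/
noncomputable def predNorm {n p : ℕ} (x : Fin n → Fin p → ℝ) (w : Fin n → ℝ)
    (δ : Fin p → ℝ) : ℝ :=
  Real.sqrt ((1 / (n : ℝ)) * ∑ i, w i * xdot x δ i ^ 2)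

/-- Support of a coefficient vector. -/
noncomputable def supp {p : ℕ} (η : Fin p → ℝ) : Finset (Fin p) :=
  Finset.univ.filter (fun j => η j ≠ 0)

/-- ℓ1 norm of a vector in `ℝ^p`. -/
def l1norm {p : ℕ} (δ : Fin p → ℝ) : ℝ := ∑ j, |δ j|

/-- The restricted cone `Δ_c̄ = {δ : ‖δ_{T^c}‖₁ ≤ c̄·‖δ_T‖₁}` for a support set `T`. -/
noncomputable def inCone {p : ℕ} (T : Finset (Fin p)) (cbar : ℝ) (δ : Fin p → ℝ) : Prop :=
  ∑ j ∈ Tᶜ, |δ j| ≤ cbar * ∑ j ∈ T, |δ j|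

/-! Since `t ↦ log (1 + exp t)` has the increasing derivative `G`, `Λ` is convex and
`Λ(η̂) − Λ(η₀) ≥ ⟨∇Λ(η₀), δ⟩ ≥ −‖∇Λ(η₀)‖_∞ ‖δ‖₁ ≥ −(λ/(cn)) ‖δ‖₁`. Minimality of `η̂` against `η₀`,
together with `η₀ = 0` off `T`, gives `Λ(η̂) − Λ(η₀) ≤ (λ/n)(‖δ_T‖₁ − ‖δ_{Tᶜ}‖₁)`. Comparing the two
bounds yields `(c − 1)‖δ_{Tᶜ}‖₁ ≤ (c + 1)‖δ_T‖₁`. -/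

theorem add_mul_sub_le_of_hasDerivAt_of_monotone {f f' : ℝ → ℝ}
    (hf : ∀ t, HasDerivAt f (f' t) t) (hf' : Monotone f') (a b : ℝ) :
    f a + f' a * (b - a) ≤ f b := by
  have hcont : Continuous f := continuous_iff_continuousAt.2 fun t => (hf t).continuousAt
  rcases lt_trichotomy a b with hab | rfl | hba
  · obtain ⟨ξ, hξ, hslope⟩ :=
      exists_hasDerivAt_eq_slope f f' hab hcont.continuousOn fun t _ => hf t
    have h := mul_le_mul_of_nonneg_right (hf' hξ.1.le) (sub_nonneg.2 hab.le)
    rw [hslope, div_mul_cancel₀ _ (sub_ne_zero.2 hab.ne')] at h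
    linarith
  · simp
  · obtain ⟨ξ, hξ, hslope⟩ :=
      exists_hasDerivAt_eq_slope f f' hba hcont.continuousOn fun t _ => hf t
    have h := mul_le_mul_of_nonneg_right (hf' hξ.2.le) (sub_nonneg.2 hba.le)
    rw [hslope, div_mul_cancel₀ _ (sub_ne_zero.2 hba.ne')] at h
    linarith

theorem logistic_monotone : Monotone logistic := by
  intro a b hab
  unfold logistic
  rw [div_le_div_iff₀ (by positivity) (by positivity)]
  nlinarith [Real.exp_le_exp.2 hab]

theorem hasDerivAt_log_one_add_exp_s7 (t : ℝ) :
    HasDerivAt (fun t => Real.log (1 + Real.exp t)) (logistic t) t := by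
  simpa [logistic] using ((Real.hasDerivAt_exp t).const_add 1).log (by positivity)

theorem log_one_add_exp_add_logistic_mul_sub_le (a b : ℝ) :
    Real.log (1 + Real.exp a) + logistic a * (b - a) ≤ Real.log (1 + Real.exp b) :=
  add_mul_sub_le_of_hasDerivAt_of_monotone hasDerivAt_log_one_add_exp_s7 logistic_monotone a b

theorem xdot_sub {n p : ℕ} (x : Fin n → Fin p → ℝ) (η η' : Fin p → ℝ) (i : Fin n) :
    xdot x (η - η') i = xdot x η i - xdot x η' i := by
  simp only [xdot, Pi.sub_apply, mul_sub, sum_sub_distrib]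

theorem sum_gradLam_mul {n p : ℕ} (x : Fin n → Fin p → ℝ) (y : Fin n → ℝ) (η δ : Fin p → ℝ) :
    ∑ j, gradLam x y η j * δ j
      = (1 / (n : ℝ)) * ∑ i, (logistic (xdot x η i) - y i) * xdot x δ i := by
  simp only [gradLam, xdot, sum_mul, mul_sum]
  rw [sum_comm]
  exact sum_congr rfl fun i _ => sum_congr rfl fun j _ => by ring

theorem Lam_add_sum_gradLam_mul_le {n p : ℕ} (x : Fin n → Fin p → ℝ) (y : Fin n → ℝ)
    (η₀ η : Fin p → ℝ) :
    Lam x y η₀ + ∑ j, gradLam x y η₀ j * (η - η₀) j ≤ Lam x y η := by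
  rw [sum_gradLam_mul, Lam, Lam, ← mul_add, ← sum_add_distrib]
  gcongr with i
  have h := log_one_add_exp_add_logistic_mul_sub_le (xdot x η₀ i) (xdot x η i)
  rw [xdot_sub]
  linarith

theorem abs_sum_mul_le_iSup_abs_mul_l1norm {p : ℕ} (g δ : Fin p → ℝ) :
    |∑ j, g j * δ j| ≤ (⨆ j, |g j|) * l1norm δ := by
  calc |∑ j, g j * δ j| ≤ ∑ j, |g j| * |δ j| := by
        simpa only [abs_mul] using abs_sum_le_sum_abs (fun j => g j * δ j) univ
    _ ≤ ∑ j, (⨆ j, |g j|) * |δ j| := by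
        gcongr with j
        exact le_ciSup (f := fun j => |g j|) (Set.finite_range _).bddAbove j
    _ = (⨆ j, |g j|) * l1norm δ := by rw [l1norm, mul_sum]

theorem l1norm_eq_sum_add_sum_compl {p : ℕ} (T : Finset (Fin p)) (δ : Fin p → ℝ) :
    l1norm δ = ∑ j ∈ T, |δ j| + ∑ j ∈ Tᶜ, |δ j| :=
  (sum_add_sum_compl T _).symm

theorem l1norm_sub_l1norm_le {p : ℕ} (η₀ η : Fin p → ℝ) :
    l1norm η₀ - l1norm η
      ≤ ∑ j ∈ supp η₀, |(η - η₀) j| - ∑ j ∈ (supp η₀)ᶜ, |(η - η₀) j| := by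
  rw [l1norm_eq_sum_add_sum_compl (supp η₀) η₀, l1norm_eq_sum_add_sum_compl (supp η₀) η]
  have hsupp : ∑ j ∈ supp η₀, (|η₀ j| - |η j|) ≤ ∑ j ∈ supp η₀, |(η - η₀) j| :=
    sum_le_sum fun j _ => by
      simpa only [Pi.sub_apply, abs_sub_comm (η j)] using abs_sub_abs_le_abs_sub (η₀ j) (η j)
  have hcompl : ∑ j ∈ (supp η₀)ᶜ, (|η₀ j| - |η j|) = -∑ j ∈ (supp η₀)ᶜ, |(η - η₀) j| := by
    rw [← sum_neg_distrib]
    refine sum_congr rfl fun j hj => ?_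
    have hj0 : η₀ j = 0 := by simpa [supp] using hj
    simp [hj0]
  simp only [sum_sub_distrib] at hsupp hcompl
  linarith

theorem inCone_supp_of_minimizer {p : ℕ} {f : (Fin p → ℝ) → ℝ} {η₀ g ηhat : Fin p → ℝ}
    {L c : ℝ} (hsub : ∀ η, f η₀ + ∑ j, g j * (η - η₀) j ≤ f η)
    (hL : 0 < L) (hc : 1 < c) (hpen : c * ⨆ j, |g j| ≤ L)
    (hmin : ∀ η, f ηhat + L * l1norm ηhat ≤ f η + L * l1norm η) :
    inCone (supp η₀) ((c + 1) / (c - 1)) (ηhat - η₀) := by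
  set δ := ηhat - η₀
  set B := ⨆ j, |g j|
  set A := ∑ j ∈ supp η₀, |δ j|
  set R := ∑ j ∈ (supp η₀)ᶜ, |δ j|
  have hB : 0 ≤ B := Real.iSup_nonneg fun j => abs_nonneg _
  have hA : 0 ≤ A := sum_nonneg fun j _ => abs_nonneg _
  have hR : 0 ≤ R := sum_nonneg fun j _ => abs_nonneg _
  have hgrad : -(B * (A + R)) ≤ ∑ j, g j * δ j := by
    rw [← l1norm_eq_sum_add_sum_compl]
    exact neg_le_of_abs_le (abs_sum_mul_le_iSup_abs_mul_l1norm g δ)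
  have hpenalty : L * (l1norm η₀ - l1norm ηhat) ≤ L * (A - R) :=
    mul_le_mul_of_nonneg_left (l1norm_sub_l1norm_le η₀ ηhat) hL.le
  have hbasic : -(B * (A + R)) ≤ L * (A - R) := by
    linarith [hsub ηhat, hmin η₀]
  have hcone : 0 ≤ L * ((c + 1) * A - (c - 1) * R) := by
    nlinarith [mul_le_mul_of_nonneg_right hpen (add_nonneg hA hR)]
  rw [inCone, div_mul_eq_mul_div, le_div_iff₀ (by linarith)]
  nlinarith [nonneg_of_mul_nonneg_right hcone hL]

theorem lasso_logistic_cone_general {n p : ℕ} (hn : 0 < n)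
    (x : Fin n → Fin p → ℝ) (y : Fin n → ℝ)
    (η₀ : Fin p → ℝ)
    (lam c : ℝ) (hlam : 0 < lam) (hc : 1 < c)
    (hpen : c * gradLamSup x y η₀ ≤ lam / (n : ℝ))
    (ηhat : Fin p → ℝ)
    (hmin : ∀ η : Fin p → ℝ,
      Lam x y ηhat + (lam / (n : ℝ)) * l1norm ηhat
        ≤ Lam x y η + (lam / (n : ℝ)) * l1norm η) :
    inCone (supp η₀) ((c + 1) / (c - 1)) (ηhat - η₀) :=
  inCone_supp_of_minimizer (Lam_add_sum_gradLam_mul_le x y η₀) (by positivity) hc hpen hmin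

/-- Cone containment for the ℓ1-penalized logistic regression estimator: if
`λ/n ≥ c·‖∇Λ(η₀)‖_∞` with `c > 1`, then any global minimizer `η̂` of
`η ↦ Λ(η) + (λ/n)‖η‖₁` satisfies `‖(η̂−η₀)_{T^c}‖₁ ≤ c̄·‖(η̂−η₀)_T‖₁`
where `c̄ = (c+1)/(c−1)` and `T = support(η₀)`. -/
theorem lasso_logistic_cone {n p : ℕ} (hn : 0 < n) (hp : 0 < p)
    (x : Fin n → Fin p → ℝ) (y : Fin n → ℝ) (hy : ∀ i, y i = 0 ∨ y i = 1)
    (η₀ : Fin p → ℝ) (hs : 1 ≤ (supp η₀).card)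
    (lam c : ℝ) (hlam : 0 < lam) (hc : 1 < c)
    (hpen : c * gradLamSup x y η₀ ≤ lam / (n : ℝ))
    (ηhat : Fin p → ℝ)
    (hmin : ∀ η : Fin p → ℝ,
      Lam x y ηhat + (lam / (n : ℝ)) * l1norm ηhat
        ≤ Lam x y η + (lam / (n : ℝ)) * l1norm η) :
    inCone (supp η₀) ((c + 1) / (c - 1)) (ηhat - η₀) :=
  lasso_logistic_cone_general hn x y η₀ lam c hlam hc hpen ηhat hmin
end

section
/- Let K = max_{i≤n}‖x_i‖_∞, let c̄ > 0, and let κ > 0 satisfy κ·‖δ_T‖ ≤ ‖√w_i·x_i'δ‖_{2,n} for every δ ∈ Δ_c̄. Then for every δ ∈ Δ_c̄: κ·(1/n)∑_{i=1}^n w_i·|x_i'δ|³ ≤ (1+c̄)·√s·K·‖√w_i·x_i'δ‖³_{2,n}. In particular, the restricted nonlinear impact coefficient over the cone Δ_c̄ is bounded below by κ/((1+c̄)·√s·K). -/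
open Finset

/-!
Each prediction is controlled uniformly: by Hölder, `|x_i'δ| ≤ K‖δ‖₁`; on the cone
`‖δ‖₁ ≤ (1+c̄)‖δ_T‖₁ ≤ (1+c̄)√s‖δ_T‖`; and the restricted eigenvalue condition turns `κ‖δ_T‖`
into the prediction norm `P`. Hence `κ|x_i'δ| ≤ (1+c̄)√s·K·P` for every `i`, and writing
`|x_i'δ|³ = (x_i'δ)²·|x_i'δ|` bounds the weighted cubic mean by `(1+c̄)√s·K·P` times the
weighted quadratic mean `P²`.
-/

lemma logistic_pos (t : ℝ) : 0 < logistic t := by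
  unfold logistic
  positivity

lemma logistic_lt_one (t : ℝ) : logistic t < 1 :=
  (div_lt_one (by positivity)).2 (lt_one_add _)

lemma wgt_nonneg {n p : ℕ} (x : Fin n → Fin p → ℝ) (η₀ : Fin p → ℝ) (i : Fin n) :
    0 ≤ wgt x η₀ i :=
  mul_nonneg (logistic_pos _).le (sub_nonneg.2 (logistic_lt_one _).le)

lemma predNorm_sq {n p : ℕ} (x : Fin n → Fin p → ℝ) {w : Fin n → ℝ} (hw : ∀ i, 0 ≤ w i)
    (δ : Fin p → ℝ) :
    predNorm x w δ ^ 2 = (1 / (n : ℝ)) * ∑ i, w i * xdot x δ i ^ 2 :=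
  Real.sq_sqrt (mul_nonneg (by positivity) (sum_nonneg fun i _ => mul_nonneg (hw i) (sq_nonneg _)))

lemma abs_xdot_le_mul_l1norm {n p : ℕ} {x : Fin n → Fin p → ℝ} {K : ℝ} {i : Fin n}
    (hx : ∀ j, |x i j| ≤ K) (δ : Fin p → ℝ) :
    |xdot x δ i| ≤ K * l1norm δ :=
  calc |xdot x δ i| ≤ ∑ j, |x i j| * |δ j| := by
        simpa only [xdot, abs_mul] using abs_sum_le_sum_abs (fun j => x i j * δ j) univ
    _ ≤ ∑ j, K * |δ j| := by gcongr with j; exact hx j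
    _ = K * l1norm δ := (mul_sum _ _ _).symm

lemma sum_abs_le_sqrt_card_mul_sqrt_sum_sq {ι : Type*} (s : Finset ι) (f : ι → ℝ) :
    ∑ j ∈ s, |f j| ≤ Real.sqrt s.card * Real.sqrt (∑ j ∈ s, f j ^ 2) := by
  rw [← Real.sqrt_mul (Nat.cast_nonneg _)]
  apply Real.le_sqrt_of_sq_le
  simpa only [sq_abs] using sq_sum_le_card_mul_sum_sq (s := s) (f := fun j => |f j|)

lemma l1norm_le_of_inCone {p : ℕ} {T : Finset (Fin p)} {cbar : ℝ} {δ : Fin p → ℝ}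
    (hδ : inCone T cbar δ) : l1norm δ ≤ (1 + cbar) * ∑ j ∈ T, |δ j| := by
  rw [l1norm, ← sum_add_sum_compl T]
  unfold inCone at hδ
  linarith

lemma l1norm_le_sqrt_card_mul_of_inCone {p : ℕ} {T : Finset (Fin p)} {cbar : ℝ}
    (hcbar : 0 ≤ 1 + cbar) {δ : Fin p → ℝ} (hδ : inCone T cbar δ) :
    l1norm δ ≤ (1 + cbar) * Real.sqrt T.card * Real.sqrt (∑ j ∈ T, δ j ^ 2) :=
  calc l1norm δ ≤ (1 + cbar) * ∑ j ∈ T, |δ j| := l1norm_le_of_inCone hδ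
    _ ≤ (1 + cbar) * (Real.sqrt T.card * Real.sqrt (∑ j ∈ T, δ j ^ 2)) := by
        gcongr; exact sum_abs_le_sqrt_card_mul_sqrt_sum_sq T δ
    _ = _ := (mul_assoc _ _ _).symm

lemma mul_abs_xdot_le_of_inCone {n p : ℕ} {x : Fin n → Fin p → ℝ} {K : ℝ}
    (hx : ∀ i j, |x i j| ≤ K) (hK : 0 ≤ K) {T : Finset (Fin p)} {cbar : ℝ}
    (hcbar : 0 ≤ 1 + cbar) {κ P : ℝ} (hκ : 0 ≤ κ) {δ : Fin p → ℝ} (hδ : inCone T cbar δ)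
    (hRE : κ * Real.sqrt (∑ j ∈ T, δ j ^ 2) ≤ P) (i : Fin n) :
    κ * |xdot x δ i| ≤ (1 + cbar) * Real.sqrt T.card * K * P :=
  calc κ * |xdot x δ i|
      ≤ κ * (K * ((1 + cbar) * Real.sqrt T.card * Real.sqrt (∑ j ∈ T, δ j ^ 2))) := by
        gcongr
        exact (abs_xdot_le_mul_l1norm (hx i) δ).trans
          (by gcongr; exact l1norm_le_sqrt_card_mul_of_inCone hcbar hδ)
    _ = (1 + cbar) * Real.sqrt T.card * K * (κ * Real.sqrt (∑ j ∈ T, δ j ^ 2)) := by ring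
    _ ≤ (1 + cbar) * Real.sqrt T.card * K * P := by gcongr

lemma mul_weighted_mean_abs_cube_le {ι : Type*} [Fintype ι] {w v : ι → ℝ}
    (hw : ∀ i, 0 ≤ w i) {c κ M : ℝ} (hc : 0 ≤ c) (hv : ∀ i, κ * |v i| ≤ M) :
    κ * (c * ∑ i, w i * |v i| ^ 3) ≤ M * (c * ∑ i, w i * v i ^ 2) :=
  calc κ * (c * ∑ i, w i * |v i| ^ 3) = c * ∑ i, w i * v i ^ 2 * (κ * |v i|) := by
        simp only [mul_sum, ← sq_abs (v _)]
        ring_nf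
    _ ≤ c * ∑ i, w i * v i ^ 2 * M := by
        gcongr with i
        · exact mul_nonneg (hw i) (sq_nonneg _)
        · exact hv i
    _ = M * (c * ∑ i, w i * v i ^ 2) := by rw [← sum_mul]; ring

theorem restricted_nonlinear_impact_bound_general {n p : ℕ}
    (x : Fin n → Fin p → ℝ) (η₀ : Fin p → ℝ)
    (K : ℝ) (hK : K = ⨆ i : Fin n, ⨆ j : Fin p, |x i j|)
    (cbar : ℝ) (hcbar : 0 < cbar)
    (κ : ℝ) (hκ : 0 < κ)
    (hRE : ∀ δ : Fin p → ℝ, inCone (supp η₀) cbar δ →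
      κ * Real.sqrt (∑ j ∈ supp η₀, δ j ^ 2) ≤ predNorm x (wgt x η₀) δ) :
    ∀ δ : Fin p → ℝ, inCone (supp η₀) cbar δ →
      κ * ((1 / (n : ℝ)) * ∑ i, wgt x η₀ i * |xdot x δ i| ^ 3)
          ≤ (1 + cbar) * Real.sqrt ((supp η₀).card) * K * predNorm x (wgt x η₀) δ ^ 3 ∧
        (κ / ((1 + cbar) * Real.sqrt ((supp η₀).card) * K))
            * ((1 / (n : ℝ)) * ∑ i, wgt x η₀ i * |xdot x δ i| ^ 3)
          ≤ predNorm x (wgt x η₀) δ ^ 3 := by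
  intro δ hδ
  have hK0 : 0 ≤ K := by
    rw [hK]; exact Real.iSup_nonneg fun i => Real.iSup_nonneg fun j => abs_nonneg (x i j)
  have hx : ∀ i j, |x i j| ≤ K := fun i j => by
    rw [hK]
    exact (le_ciSup (Set.finite_range _).bddAbove j).trans
      (le_ciSup (f := fun i => ⨆ j, |x i j|) (Set.finite_range _).bddAbove i)
  have hbound := mul_abs_xdot_le_of_inCone hx hK0 (by linarith) hκ.le hδ (hRE δ hδ)
  have hcube : κ * ((1 / (n : ℝ)) * ∑ i, wgt x η₀ i * |xdot x δ i| ^ 3)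
      ≤ (1 + cbar) * Real.sqrt ((supp η₀).card) * K * predNorm x (wgt x η₀) δ ^ 3 := by
    have := mul_weighted_mean_abs_cube_le (wgt_nonneg x η₀) (c := 1 / (n : ℝ)) (by positivity)
      hbound
    rwa [← predNorm_sq x (wgt_nonneg x η₀), mul_assoc, ← pow_succ'] at this
  refine ⟨hcube, ?_⟩
  rw [div_mul_eq_mul_div]
  exact div_le_of_le_mul₀ (by have := hcbar.le; positivity) (pow_nonneg (Real.sqrt_nonneg _) 3)
    (by linarith)

/-- Lower bound on the restricted nonlinear impact coefficient over the cone `Δ_c̄`: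
with `K = max_i ‖x_i‖_∞` and `κ` a weighted restricted eigenvalue, for every
`δ ∈ Δ_c̄` one has `κ·(1/n)∑ᵢ w_i|x_i'δ|³ ≤ (1+c̄)√s·K·‖√w_i x_i'δ‖³_{2,n}`; in
particular the restricted nonlinear impact coefficient is bounded below by
`κ/((1+c̄)√s·K)`, in the sense that
`(κ/((1+c̄)√s·K))·(1/n)∑ᵢ w_i|x_i'δ|³ ≤ ‖√w_i x_i'δ‖³_{2,n}` on the cone. -/
theorem restricted_nonlinear_impact_bound {n p : ℕ} (hn : 0 < n) (hp : 0 < p)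
    (x : Fin n → Fin p → ℝ) (η₀ : Fin p → ℝ) (hs : 1 ≤ (supp η₀).card)
    (K : ℝ) (hK : K = ⨆ i : Fin n, ⨆ j : Fin p, |x i j|) (hKpos : 0 < K)
    (cbar : ℝ) (hcbar : 0 < cbar)
    (κ : ℝ) (hκ : 0 < κ)
    (hRE : ∀ δ : Fin p → ℝ, inCone (supp η₀) cbar δ →
      κ * Real.sqrt (∑ j ∈ supp η₀, δ j ^ 2) ≤ predNorm x (wgt x η₀) δ) :
    ∀ δ : Fin p → ℝ, inCone (supp η₀) cbar δ →
      κ * ((1 / (n : ℝ)) * ∑ i, wgt x η₀ i * |xdot x δ i| ^ 3)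
          ≤ (1 + cbar) * Real.sqrt ((supp η₀).card) * K * predNorm x (wgt x η₀) δ ^ 3 ∧
        (κ / ((1 + cbar) * Real.sqrt ((supp η₀).card) * K))
            * ((1 / (n : ℝ)) * ∑ i, wgt x η₀ i * |xdot x δ i| ^ 3)
          ≤ predNorm x (wgt x η₀) δ ^ 3 :=
  restricted_nonlinear_impact_bound_general x η₀ K hK cbar hcbar κ hκ hRE
end
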